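/- arXiv:1105.3355 — 2 statements merged into one kernel-verified Lean document; each statement's English description precedes it below -/
import Mathlib

section
/- Climbing lemma: let A ⊆ 2^ω be measurable, s a finite binary string with μ(A_s) > 0, and r a real with μ(A_s) < r < 1. Then there exists a string t properly extending s with μ(A_t) ≥ r and such that for every u with s ⊆ u ⊊ t one has μ(A_u) ≥ μ(A_s). -/
open MeasureTheory Filter Topology Set
open scoped ENNReal symmDiff

noncomputable section

/-- The Cantor space `2^ω`. -/
abbrev Cantor : Type := ℕ → Bool

/-- The first `n` digits of `x` as a finite binary string. -/
def seg (x : Cantor) (n : ℕ) : List Bool := List.ofFn (fun i : Fin n => x i)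

/-- The basic clopen set `N_s` of all extensions of the finite string `s`. -/
def cyl (s : List Bool) : Set Cantor := {x | seg x s.length = s}

/-- Concatenation `s⌢x` of a finite string with an infinite sequence. -/
def cat (s : List Bool) (x : Cantor) : Cantor :=
  fun n => if h : n < s.length then s.get ⟨n, h⟩ else x (n - s.length)

/-- The localization `A_s = {x : s⌢x ∈ A}` of `A` at `s`. -/
def loc (s : List Bool) (A : Set Cantor) : Set Cantor := {x | cat s x ∈ A}

/-- `Φ(A)`: the set of points of density `1` in `A`. -/
def dens1 (μ : Measure Cantor) (A : Set Cantor) : Set Cantor :=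
  {x | Tendsto (fun n => μ (A ∩ cyl (seg x n)) / μ (cyl (seg x n))) atTop (𝓝 1)}

/-- `μ` is the coin-tossing (Lebesgue) measure on Cantor space:
it gives each basic clopen set `N_s` measure `2^{-|s|}`. -/
def IsCoin (μ : Measure Cantor) : Prop :=
  ∀ s : List Bool, μ (cyl s) = (2 : ℝ≥0∞)⁻¹ ^ s.length

/-!
Write `B = A_s` and `m = μ B`. The strings `v` that are minimal with `μ (B_v) < m` form an
antichain; since `μ (B ∩ N_v) = 2^{-|v|} μ (B_v)`, the union `F` of their cylinders satisfies
`μ (B ∩ F) < m · μ F ≤ m`. For the set `E` of points `x` with `μ (B_{x|n}) < r` for all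
`n`, covering an open `U ⊇ B ∩ E` by the maximal cylinders `N_v ⊆ U` with `μ (B_v) < r`
gives `μ (B ∩ E) ≤ r · μ U`, so outer regularity and `r < 1` make `B ∩ E` null. Hence some
`x ∈ B` avoids `F ∪ E`: all its prefixes keep `μ (B_{x|n}) ≥ m` and one of them, `x|n`,
reaches `r`; take `t = s ⌢ x|n`.
-/

@[simp] lemma seg_length (x : Cantor) (n : ℕ) : (seg x n).length = n := by simp [seg]

@[simp] lemma seg_zero (x : Cantor) : seg x 0 = [] := by simp [seg]

lemma getElem_seg (x : Cantor) (n i : ℕ) (h : i < (seg x n).length) : (seg x n)[i] = x i := by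
  simp [seg]

lemma take_seg (x : Cantor) {k n : ℕ} (h : k ≤ n) : (seg x n).take k = seg x k :=
  List.ext_getElem (by simp [h]) fun i _ _ => by simp only [List.getElem_take, getElem_seg]

lemma seg_prefix_seg (x : Cantor) {k n : ℕ} (h : k ≤ n) : seg x k <+: seg x n :=
  take_seg x h ▸ List.take_prefix _ _

lemma eq_seg_of_prefix {w : List Bool} {x : Cantor} {n : ℕ} (h : w <+: seg x n) :
    w = seg x w.length := by
  conv_lhs => rw [List.prefix_iff_eq_take.1 h, take_seg x (by simpa using h.length_le)]

lemma mem_cyl {x : Cantor} {v : List Bool} : x ∈ cyl v ↔ seg x v.length = v := Iff.rfl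

lemma mem_cyl_seg (x : Cantor) (n : ℕ) : x ∈ cyl (seg x n) := by
  rw [mem_cyl, seg_length]

lemma cyl_seg (x : Cantor) (n : ℕ) : cyl (seg x n) = PiNat.cylinder x n := by
  ext y
  simp [mem_cyl, PiNat.mem_cylinder_iff, seg, List.ofFn_inj, funext_iff, Fin.forall_iff]

@[simp] lemma cyl_nil : cyl [] = univ :=
  eq_univ_of_forall fun x => by simp [mem_cyl]

lemma cyl_anti {u v : List Bool} (h : u <+: v) : cyl v ⊆ cyl u :=
  fun x (hx : seg x v.length = v) => (eq_seg_of_prefix (x := x) (n := v.length) (by rwa [hx])).symm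

lemma prefix_or_prefix_of_mem_cyl {u v : List Bool} {x : Cantor} (hu : x ∈ cyl u)
    (hv : x ∈ cyl v) : u <+: v ∨ v <+: u := by
  rw [mem_cyl] at hu hv
  rw [← hu, ← hv]
  exact (le_total u.length v.length).imp (seg_prefix_seg x) (seg_prefix_seg x)

lemma disjoint_cyl {u v : List Bool} (huv : ¬ u <+: v) (hvu : ¬ v <+: u) :
    Disjoint (cyl u) (cyl v) :=
  Set.disjoint_left.2 fun _ hu hv => (prefix_or_prefix_of_mem_cyl hu hv).elim huv hvu

lemma seg_cat_add (v : List Bool) (x : Cantor) (k : ℕ) :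
    seg (cat v x) (v.length + k) = v ++ seg x k := by
  refine List.ext_getElem (by simp) fun i hi _ => ?_
  rw [getElem_seg]
  by_cases h : i < v.length
  · simp [cat, h, List.getElem_append_left h]
  · rw [List.getElem_append_right (not_lt.1 h), getElem_seg]
    simp [cat, h]

lemma cat_mem_cyl (v : List Bool) (x : Cantor) : cat v x ∈ cyl v := by
  simpa [mem_cyl] using seg_cat_add v x 0

lemma cat_append (s v : List Bool) (x : Cantor) : cat (s ++ v) x = cat s (cat v x) := by
  funext n
  simp only [cat, List.length_append]
  by_cases h₁ : n < s.length
  · simp [h₁, List.getElem_append_left h₁, Nat.lt_add_right]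
  · by_cases h₂ : n < s.length + v.length
    · simp [h₁, h₂, List.getElem_append_right (not_lt.1 h₁), Nat.sub_lt_left_of_lt_add
        (not_lt.1 h₁) h₂]
    · rw [dif_neg h₂, dif_neg h₁, dif_neg (by omega), Nat.sub_sub]

lemma cat_nil (x : Cantor) : cat [] x = x :=
  funext fun n => by simp [cat]

@[simp] lemma loc_nil (B : Set Cantor) : loc [] B = B := by
  ext x
  simp [loc, cat_nil]

lemma loc_append (s v : List Bool) (A : Set Cantor) : loc (s ++ v) A = loc v (loc s A) := by
  ext x
  simp [loc, cat_append]

lemma measurable_cat (v : List Bool) : Measurable (cat v) := by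
  refine measurable_pi_iff.2 fun n => ?_
  by_cases h : n < v.length
  · simp only [cat, dif_pos h, measurable_const]
  · simp only [cat, dif_neg h]
    exact measurable_pi_apply _

lemma measurableSet_loc {A : Set Cantor} (hA : MeasurableSet A) (v : List Bool) :
    MeasurableSet (loc v A) :=
  measurable_cat v hA

lemma range_cyl : range cyl = {U | ∃ (x : Cantor) (n : ℕ), U = PiNat.cylinder x n} := by
  ext U
  constructor
  · rintro ⟨v, rfl⟩
    refine ⟨cat v fun _ => false, v.length, ?_⟩
    rw [← cyl_seg, cat_mem_cyl]
  · rintro ⟨x, n, rfl⟩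
    exact ⟨seg x n, cyl_seg x n⟩

lemma isTopologicalBasis_range_cyl : TopologicalSpace.IsTopologicalBasis (range cyl) :=
  range_cyl ▸ PiNat.isTopologicalBasis_cylinders _

lemma measurableSet_cyl (v : List Bool) : MeasurableSet (cyl v) :=
  (isTopologicalBasis_range_cyl.isOpen ⟨v, rfl⟩).measurableSet

lemma exists_cyl_seg_subset {U : Set Cantor} (hU : IsOpen U) {x : Cantor} (hx : x ∈ U) :
    ∃ n, cyl (seg x n) ⊆ U := by
  obtain ⟨_, ⟨v, rfl⟩, hxv, hvU⟩ :=
    isTopologicalBasis_range_cyl.exists_subset_of_mem_open hx hU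
  exact ⟨v.length, by rwa [mem_cyl.1 hxv]⟩

lemma isPiSystem_range_cyl : IsPiSystem (range cyl) := by
  rintro _ ⟨u, rfl⟩ _ ⟨v, rfl⟩ ⟨x, hu, hv⟩
  rcases prefix_or_prefix_of_mem_cyl hu hv with h | h
  · exact ⟨v, (inter_eq_right.2 (cyl_anti h)).symm⟩
  · exact ⟨u, (inter_eq_left.2 (cyl_anti h)).symm⟩

lemma preimage_cat_cyl_of_prefix {u v : List Bool} (h : u <+: v) : cat v ⁻¹' cyl u = univ :=
  eq_univ_of_forall fun x => cyl_anti h (cat_mem_cyl v x)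

lemma preimage_cat_cyl_append (v w : List Bool) : cat v ⁻¹' cyl (v ++ w) = cyl w := by
  ext x
  simp only [mem_preimage, mem_cyl, List.length_append, seg_cat_add, List.append_cancel_left_eq]

lemma preimage_cat_cyl_eq_empty {u v : List Bool} (huv : ¬ u <+: v) (hvu : ¬ v <+: u) :
    cat v ⁻¹' cyl u = ∅ :=
  eq_empty_of_forall_notMem fun x hx =>
    (disjoint_cyl huv hvu).notMem_of_mem_left hx (cat_mem_cyl v x)

def IsMinimalPrefix {α : Type*} (P : List α → Prop) (v : List α) : Prop :=
  P v ∧ ∀ w, w <+: v → P w → w = v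

lemma pairwiseDisjoint_cyl_isMinimalPrefix (P : List Bool → Prop) :
    {v | IsMinimalPrefix P v}.PairwiseDisjoint cyl := fun u hu v hv huv =>
  disjoint_cyl (fun h => huv (hv.2 u h hu.1)) (fun h => huv (hu.2 v h hv.1).symm)

lemma mem_biUnion_cyl_isMinimalPrefix {P : List Bool → Prop} {x : Cantor} {n : ℕ}
    (h : P (seg x n)) : x ∈ ⋃ v ∈ {v | IsMinimalPrefix P v}, cyl v := by
  classical
  have hex : ∃ n, P (seg x n) := ⟨n, h⟩
  refine mem_biUnion ⟨Nat.find_spec hex, fun w hw hPw => ?_⟩ (mem_cyl_seg x (Nat.find hex))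
  rw [eq_seg_of_prefix hw] at hPw ⊢
  have hle : w.length ≤ Nat.find hex := by simpa using hw.length_le
  rw [le_antisymm hle (Nat.find_min' hex hPw)]

def neverReaches (μ : Measure Cantor) (B : Set Cantor) (r : ℝ≥0∞) : Set Cantor :=
  {x | ∀ n, μ (loc (seg x n) B) < r}

namespace IsCoin

variable {μ : Measure Cantor} (hμ : IsCoin μ)
include hμ

lemma measure_univ : μ univ = 1 := by
  simpa using hμ []

lemma isProbabilityMeasure : IsProbabilityMeasure μ :=
  ⟨hμ.measure_univ⟩

lemma restrict_cyl (v : List Bool) :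
    μ.restrict (cyl v) = (2⁻¹ ^ v.length : ℝ≥0∞) • μ.map (cat v) := by
  have := hμ.isProbabilityMeasure
  refine ext_of_generate_finite _
    (BorelSpace.measurable_eq.trans isTopologicalBasis_range_cyl.borel_eq_generateFrom)
    isPiSystem_range_cyl (fun _ ⟨u, hu⟩ => ?_) ?_
  · subst hu
    rw [Measure.restrict_apply (measurableSet_cyl u), Measure.smul_apply,
      Measure.map_apply (measurable_cat v) (measurableSet_cyl u), smul_eq_mul]
    by_cases huv : u <+: v
    · rw [inter_eq_right.2 (cyl_anti huv), preimage_cat_cyl_of_prefix huv, hμ.measure_univ,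
        hμ v, mul_one]
    by_cases hvu : v <+: u
    · obtain ⟨w, rfl⟩ := hvu
      rw [inter_eq_left.2 (cyl_anti (List.prefix_append v w)), preimage_cat_cyl_append, hμ, hμ,
        List.length_append, pow_add]
    · rw [(disjoint_cyl huv hvu).inter_eq, preimage_cat_cyl_eq_empty huv hvu]
      simp
  · rw [Measure.restrict_apply_univ, Measure.smul_apply,
      Measure.map_apply (measurable_cat v) MeasurableSet.univ, preimage_univ, hμ.measure_univ,
      hμ v, smul_eq_mul, mul_one]

lemma measure_biUnion_cyl {S : Set (List Bool)} (hS : S.PairwiseDisjoint cyl) :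
    μ (⋃ v ∈ S, cyl v) = ∑' v : S, 2⁻¹ ^ (v : List Bool).length := by
  rw [measure_biUnion S.to_countable hS fun v _ => measurableSet_cyl v]
  exact tsum_congr fun v => hμ v

variable {B : Set Cantor} (hB : MeasurableSet B)
include hB

lemma measure_inter_cyl (v : List Bool) :
    μ (B ∩ cyl v) = 2⁻¹ ^ v.length * μ (loc v B) := by
  rw [← Measure.restrict_apply hB, hμ.restrict_cyl, Measure.smul_apply,
    Measure.map_apply (measurable_cat v) hB, smul_eq_mul]
  rfl

lemma measure_inter_biUnion_cyl {S : Set (List Bool)} (hS : S.PairwiseDisjoint cyl) :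
    μ (B ∩ ⋃ v ∈ S, cyl v) = ∑' v : S, 2⁻¹ ^ (v : List Bool).length * μ (loc v B) := by
  rw [inter_iUnion₂, measure_biUnion S.to_countable
    (hS.mono fun _ => inter_subset_right) fun v _ => hB.inter (measurableSet_cyl v)]
  exact tsum_congr fun v => hμ.measure_inter_cyl hB v

lemma measure_inter_biUnion_cyl_le {S : Set (List Bool)} (hS : S.PairwiseDisjoint cyl)
    {c : ℝ≥0∞} (hc : ∀ v ∈ S, μ (loc v B) ≤ c) :
    μ (B ∩ ⋃ v ∈ S, cyl v) ≤ c * μ (⋃ v ∈ S, cyl v) := by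
  rw [hμ.measure_inter_biUnion_cyl hB hS, hμ.measure_biUnion_cyl hS, ← ENNReal.tsum_mul_left]
  exact ENNReal.tsum_le_tsum fun v => by rw [mul_comm c]; gcongr; exact hc v v.2

lemma measure_inter_biUnion_cyl_lt {S : Set (List Bool)} (hS : S.PairwiseDisjoint cyl)
    {c : ℝ≥0∞} (hc : ∀ v ∈ S, μ (loc v B) < c) (hne : S.Nonempty) :
    μ (B ∩ ⋃ v ∈ S, cyl v) < c * μ (⋃ v ∈ S, cyl v) := by
  have := hμ.isProbabilityMeasure
  have hfin := measure_ne_top μ (B ∩ ⋃ v ∈ S, cyl v)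
  rw [hμ.measure_inter_biUnion_cyl hB hS] at hfin ⊢
  rw [hμ.measure_biUnion_cyl hS, ← ENNReal.tsum_mul_left]
  obtain ⟨v, hv⟩ := hne
  refine ENNReal.tsum_lt_tsum (i := ⟨v, hv⟩) hfin
    (fun v => by rw [mul_comm c]; gcongr; exact (hc v v.2).le) ?_
  rw [mul_comm c]
  exact ENNReal.mul_lt_mul_right (by simp) (by simp) (hc v hv)

lemma measure_inter_neverReaches_le_mul {r : ℝ≥0∞} {U : Set Cantor} (hU : IsOpen U)
    (hsub : B ∩ neverReaches μ B r ⊆ U) :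
    μ (B ∩ neverReaches μ B r) ≤ r * μ U := by
  let S := {v | IsMinimalPrefix (fun v => cyl v ⊆ U ∧ μ (loc v B) < r) v}
  have hcover : B ∩ neverReaches μ B r ⊆ B ∩ ⋃ v ∈ S, cyl v := by
    rintro x ⟨hxB, hx⟩
    obtain ⟨n, hn⟩ := exists_cyl_seg_subset hU (hsub ⟨hxB, hx⟩)
    exact ⟨hxB, mem_biUnion_cyl_isMinimalPrefix ⟨hn, hx n⟩⟩
  have hSU : ⋃ v ∈ S, cyl v ⊆ U := iUnion₂_subset fun v hv => hv.1.1
  calc μ (B ∩ neverReaches μ B r)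
      ≤ μ (B ∩ ⋃ v ∈ S, cyl v) := measure_mono hcover
    _ ≤ r * μ (⋃ v ∈ S, cyl v) := hμ.measure_inter_biUnion_cyl_le hB
        (pairwiseDisjoint_cyl_isMinimalPrefix _) fun v hv => hv.1.2.le
    _ ≤ r * μ U := by gcongr

lemma measure_inter_neverReaches_eq_zero {r : ℝ≥0∞} (hr : r < 1) :
    μ (B ∩ neverReaches μ B r) = 0 := by
  have := hμ.isProbabilityMeasure
  set K := B ∩ neverReaches μ B r
  have hK : μ K ≤ r * μ K := by
    refine ENNReal.le_of_forall_pos_le_add fun ε hε _ => ?_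
    obtain ⟨U, hKU, hU, hμU⟩ := K.exists_isOpen_le_add μ (ENNReal.coe_ne_zero.2 hε.ne')
    calc μ K ≤ r * μ U := hμ.measure_inter_neverReaches_le_mul hB hU hKU
      _ ≤ r * (μ K + ε) := by gcongr
      _ ≤ r * μ K + ε := by rw [mul_add]; gcongr; exact mul_le_of_le_one_left' hr.le
  by_contra hne
  exact (ENNReal.mul_lt_mul_left hne (measure_ne_top μ K) hr).not_ge (by simpa using hK)

lemma exists_forall_le_loc_and_exists_le_loc (hpos : 0 < μ B) {r : ℝ≥0∞} (hr : r < 1) :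
    ∃ x : Cantor,
      (∀ n, μ B ≤ μ (loc (seg x n) B)) ∧ ∃ n, r ≤ μ (loc (seg x n) B) := by
  have := hμ.isProbabilityMeasure
  let S := {v | IsMinimalPrefix (fun v => μ (loc v B) < μ B) v}
  let F := ⋃ v ∈ S, cyl v
  let E := neverReaches μ B r
  have hF : μ (B ∩ F) < μ B := by
    rcases S.eq_empty_or_nonempty with hS | hS
    · simpa [F, hS] using hpos
    calc μ (B ∩ F) < μ B * μ F := hμ.measure_inter_biUnion_cyl_lt hB
          (pairwiseDisjoint_cyl_isMinimalPrefix _) (fun v hv => hv.1) hS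
      _ ≤ μ B := mul_le_of_le_one_right' prob_le_one
  have hE : μ (B ∩ E) = 0 := hμ.measure_inter_neverReaches_eq_zero hB hr
  obtain ⟨x, -, hx⟩ : (B \ (F ∪ E)).Nonempty := by
    refine sdiff_nonempty.2 fun hBFE => hF.not_ge ?_
    calc μ B ≤ μ (B ∩ F ∪ B ∩ E) :=
          measure_mono fun x hx => (hBFE hx).imp (⟨hx, ·⟩) (⟨hx, ·⟩)
      _ ≤ μ (B ∩ F) := by simpa [hE] using measure_union_le (μ := μ) (B ∩ F) (B ∩ E)
  refine ⟨x, fun n => not_lt.1 fun hn => hx (Or.inl ?_), ?_⟩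
  · exact mem_biUnion_cyl_isMinimalPrefix hn
  · simpa [E, neverReaches] using fun h => hx (Or.inr h)

end IsCoin

/-- Climbing lemma: from any node where A has positive localized measure one can reach
measure ≥ r without ever dropping below the starting value along the way. -/
theorem stmt13 (μ : Measure Cantor) (hμ : IsCoin μ) (A : Set Cantor) (hA : MeasurableSet A)
    (s : List Bool) (hs : 0 < μ (loc s A)) (r : ℝ≥0∞) (hr1 : μ (loc s A) < r) (hr2 : r < 1) :
    ∃ t : List Bool, s <+: t ∧ s ≠ t ∧ r ≤ μ (loc t A) ∧
      ∀ u : List Bool, s <+: u → u <+: t → u ≠ t → μ (loc s A) ≤ μ (loc u A) := by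
  obtain ⟨x, hgood, n, hn⟩ :=
    hμ.exists_forall_le_loc_and_exists_le_loc (measurableSet_loc hA s) hs hr2
  have hn0 : n ≠ 0 := by
    rintro rfl
    exact (hn.trans_lt (by simpa using hr1)).false
  refine ⟨s ++ seg x n, List.prefix_append s _, fun h => hn0 ?_, by rwa [loc_append], ?_⟩
  · simpa using congrArg List.length h
  rintro _ ⟨w, rfl⟩ hw -
  rw [List.prefix_append_right_inj] at hw
  rw [loc_append, eq_seg_of_prefix hw]
  exact hgood _
end
end

section
/- Let f : ω → ω\{0} satisfy f(n) = 1 for all sufficiently large n, and let U_f = ∪_n N_{0^{(n)}1^{(f(n))}}. Then the point 0^∞ has density 1 in U_f, hence Φ(U_f) = U_f ∪ {0^∞} ⊋ U_f; so U_f is an open set that is not 𝒯-regular. -/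
open MeasureTheory Filter Topology Set
open scoped ENNReal symmDiff

noncomputable section

/-- The rake-shaped open set U_f determined by f. -/
def Uf (f : ℕ → ℕ) : Set Cantor :=
  ⋃ n, cyl (List.replicate n false ++ List.replicate (f n) true)

/-! Idea: a point `x ≠ 0^∞` determines the only tooth `N_{0^(n) 1^(f n)}` of the rake that can
contain it, namely the one at the position `n` of its first `1`; membership in `U_f` is therefore
decided by the first `n + f n` digits of `x`, so every point outside `U_f ∪ {0^∞}` has a
neighbourhood `N_{seg x k}` disjoint from `U_f`, and every point of `U_f` one contained in it.
Near `0^∞`, every point of `N_{0^(k)}` other than `0^∞` has its first `1` at some `n ≥ k`, and once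
`f n = 1` it lies in the tooth `N_{0^(n) 1}`; hence `N_{0^(k)} \ U_f = {0^∞}` is null. -/

section Cylinders

lemma length_seg (x : Cantor) (k : ℕ) : (seg x k).length = k := by simp [seg]

lemma mem_cyl_iff {s : List Bool} {x : Cantor} :
    x ∈ cyl s ↔ ∀ i (h : i < s.length), x i = s[i] := by
  refine ⟨fun hx i h => ?_, fun h => List.ext_getElem (length_seg x _) fun i _ h2 => ?_⟩
  · simpa [seg] using (List.getElem_of_eq hx.symm h).symm
  · simpa [seg] using h i h2

lemma mem_cyl_seg_iff {x y : Cantor} {k : ℕ} : y ∈ cyl (seg x k) ↔ ∀ i < k, y i = x i := by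
  simp [mem_cyl_iff, seg]

lemma mem_cyl_seg_self (x : Cantor) (k : ℕ) : x ∈ cyl (seg x k) :=
  mem_cyl_seg_iff.2 fun _ _ => rfl

lemma mem_cyl_iff_of_mem_cyl_seg {s : List Bool} {x y : Cantor} {k : ℕ}
    (hy : y ∈ cyl (seg x k)) (hk : s.length ≤ k) : y ∈ cyl s ↔ x ∈ cyl s := by
  rw [mem_cyl_seg_iff] at hy
  simp only [mem_cyl_iff]
  exact forall₂_congr fun i h => by rw [hy i (h.trans_le hk)]

lemma cyl_seg_subset {s : List Bool} {x : Cantor} (hx : x ∈ cyl s) {k : ℕ}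
    (hk : s.length ≤ k) : cyl (seg x k) ⊆ cyl s :=
  fun _ hy => (mem_cyl_iff_of_mem_cyl_seg hy hk).2 hx

lemma mem_cyl_replicate_append_replicate {n m : ℕ} {x : Cantor} :
    x ∈ cyl (List.replicate n false ++ List.replicate m true) ↔
      ∀ i < n + m, x i = decide (n ≤ i) := by
  rw [mem_cyl_iff]
  refine forall_congr' fun i => ?_
  simp only [List.length_append, List.length_replicate]
  refine forall_congr' fun hi => ?_
  rcases lt_or_ge i n with h | h
  · rw [List.getElem_append_left (by simpa using h)]
    simp [Nat.not_le.mpr h]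
  · rw [List.getElem_append_right (by simpa using h)]
    simp [h]

lemma exists_mem_cyl_replicate_false_append_true {x : Cantor} (hx : x ≠ fun _ => false) :
    ∃ n, x ∈ cyl (List.replicate n false ++ List.replicate 1 true) := by
  have h : ∃ m, x m = true := by
    by_contra! h
    exact hx (funext fun m => by simpa using h m)
  refine ⟨Nat.find h, mem_cyl_replicate_append_replicate.2 fun i hi => ?_⟩
  rcases lt_or_eq_of_le (Nat.lt_succ_iff.1 hi) with hlt | rfl
  · simpa [Nat.not_le.mpr hlt] using Nat.find_min h hlt
  · simpa using Nat.find_spec h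

end Cylinders

section Density

variable {μ : Measure Cantor} {A : Set Cantor} {x : Cantor}

lemma IsCoin.measure_cyl_ne_zero (hμ : IsCoin μ) (s : List Bool) : μ (cyl s) ≠ 0 := by
  simp [hμ s]

lemma IsCoin.measure_cyl_ne_top (hμ : IsCoin μ) (s : List Bool) : μ (cyl s) ≠ ∞ := by
  simp [hμ s]

lemma IsCoin.measure_singleton (hμ : IsCoin μ) (x : Cantor) : μ {x} = 0 := by
  have hle (k : ℕ) : μ {x} ≤ (2 : ℝ≥0∞)⁻¹ ^ k := by
    calc μ {x} ≤ μ (cyl (seg x k)) :=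
          measure_mono (singleton_subset_iff.2 (mem_cyl_seg_self x k))
      _ = (2 : ℝ≥0∞)⁻¹ ^ k := by rw [hμ, length_seg]
  have hlim : Tendsto (fun k : ℕ => (2 : ℝ≥0∞)⁻¹ ^ k) atTop (𝓝 0) :=
    ENNReal.tendsto_pow_atTop_nhds_zero_of_lt_one (by norm_num)
  exact nonpos_iff_eq_zero.1 (ge_of_tendsto hlim (Eventually.of_forall hle))

lemma mem_dens1_of_eventually_subset_insert (hμ : IsCoin μ)
    (h : ∀ᶠ k in atTop, cyl (seg x k) ⊆ insert x A) : x ∈ dens1 μ A := by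
  refine tendsto_const_nhds.congr' (h.mono fun k hk => ?_)
  have hfull : μ (A ∩ cyl (seg x k)) = μ (cyl (seg x k)) := by
    refine le_antisymm (measure_mono inter_subset_right) ?_
    calc μ (cyl (seg x k)) = μ (cyl (seg x k) \ {x}) :=
          (measure_sdiff_null (hμ.measure_singleton x)).symm
      _ ≤ μ (A ∩ cyl (seg x k)) := measure_mono fun y ⟨hy, hyx⟩ =>
          ⟨(hk hy).resolve_left hyx, hy⟩
  dsimp only
  rw [hfull, ENNReal.div_self (hμ.measure_cyl_ne_zero _) (hμ.measure_cyl_ne_top _)]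

lemma mem_dens1_of_mem_cyl_subset (hμ : IsCoin μ) {s : List Bool} (hx : x ∈ cyl s)
    (hs : cyl s ⊆ A) : x ∈ dens1 μ A :=
  mem_dens1_of_eventually_subset_insert hμ <| eventually_atTop.2
    ⟨s.length, fun _ hk => ((cyl_seg_subset hx hk).trans hs).trans (subset_insert x A)⟩

lemma notMem_dens1_of_eventually_disjoint (h : ∀ᶠ k in atTop, Disjoint A (cyl (seg x k))) :
    x ∉ dens1 μ A := fun hx => by
  have h0 : Tendsto (fun k => μ (A ∩ cyl (seg x k)) / μ (cyl (seg x k))) atTop (𝓝 0) :=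
    tendsto_const_nhds.congr' <| h.mono fun k hk => by simp [hk.inter_eq]
  exact zero_ne_one (tendsto_nhds_unique h0 hx)

end Density

section Rake

variable {f : ℕ → ℕ}

lemma zeros_notMem_Uf (hf0 : ∀ n, 0 < f n) : (fun _ => false) ∉ Uf f := by
  simp only [Uf, mem_iUnion, mem_cyl_replicate_append_replicate, not_exists, not_forall]
  exact fun n => ⟨n, by have := hf0 n; omega, by simp⟩

lemma mem_Uf_iff (hf0 : ∀ n, 0 < f n) {n : ℕ} {x : Cantor}
    (hx : x ∈ cyl (List.replicate n false ++ List.replicate 1 true)) :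
    x ∈ Uf f ↔ x ∈ cyl (List.replicate n false ++ List.replicate (f n) true) := by
  refine ⟨fun h => ?_, fun h => mem_iUnion.2 ⟨n, h⟩⟩
  obtain ⟨m, hm⟩ := mem_iUnion.1 h
  rw [mem_cyl_replicate_append_replicate] at hx hm
  have hmn : m = n := by
    have := hf0 m
    by_contra hne
    rcases Nat.lt_or_gt_of_ne hne with hlt | hlt
    · have := (hm m (by omega)).symm.trans (hx m (by omega))
      simp at this; omega
    · have := (hm n (by omega)).symm.trans (hx n (by omega))
      simp at this; omega
  exact hmn ▸ mem_cyl_replicate_append_replicate.2 hm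

lemma Uf_subset_dens1 {μ : Measure Cantor} (hμ : IsCoin μ) : Uf f ⊆ dens1 μ (Uf f) :=
  fun _ hx => by
    obtain ⟨n, hn⟩ := mem_iUnion.1 hx
    exact mem_dens1_of_mem_cyl_subset hμ hn fun _ hy => mem_iUnion.2 ⟨n, hy⟩

lemma dens1_Uf_subset (hf0 : ∀ n, 0 < f n) {μ : Measure Cantor} :
    dens1 μ (Uf f) ⊆ insert (fun _ => false) (Uf f) := by
  intro x hx
  by_contra hxU
  obtain ⟨hx0, hxU⟩ := not_or.1 hxU
  obtain ⟨n, hn⟩ := exists_mem_cyl_replicate_false_append_true hx0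
  refine notMem_dens1_of_eventually_disjoint (eventually_atTop.2 ⟨n + f n + 1, fun k hk => ?_⟩) hx
  refine disjoint_right.2 fun y hy hyU => hxU ?_
  have hyn : y ∈ cyl (List.replicate n false ++ List.replicate 1 true) :=
    (mem_cyl_iff_of_mem_cyl_seg hy (by simp; omega)).2 hn
  rw [mem_Uf_iff hf0 hn, ← mem_cyl_iff_of_mem_cyl_seg hy (by simp; omega), ← mem_Uf_iff hf0 hyn]
  exact hyU

lemma zeros_mem_dens1_Uf {μ : Measure Cantor} (hμ : IsCoin μ) (hf : ∀ᶠ n in atTop, f n = 1) :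
    (fun _ => false) ∈ dens1 μ (Uf f) := by
  obtain ⟨N, hN⟩ := eventually_atTop.1 hf
  refine mem_dens1_of_eventually_subset_insert hμ (eventually_atTop.2 ⟨N, fun k hk y hy => ?_⟩)
  rw [mem_cyl_seg_iff] at hy
  refine or_iff_not_imp_left.2 fun hy0 => ?_
  obtain ⟨n, hn⟩ := exists_mem_cyl_replicate_false_append_true hy0
  have hkn : k ≤ n := by
    by_contra! hnk
    simpa [hy n hnk] using mem_cyl_replicate_append_replicate.1 hn n (by omega)
  exact mem_iUnion.2 ⟨n, hN n (hk.trans hkn) ▸ hn⟩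

end Rake

/-- If f(n) = 1 for all large n, then 0^∞ has density 1 in U_f, so
Φ(U_f) = U_f ∪ {0^∞} properly contains U_f: U_f is open but not 𝒯-regular. -/
theorem stmt16 (μ : Measure Cantor) (hμ : IsCoin μ) (f : ℕ → ℕ) (hf0 : ∀ n, 0 < f n)
    (hf : ∀ᶠ n in atTop, f n = 1) :
    (fun _ => false) ∈ dens1 μ (Uf f) ∧
    dens1 μ (Uf f) = Uf f ∪ {fun _ => false} ∧
    Uf f ≠ dens1 μ (Uf f) := by
  have hzeros := zeros_mem_dens1_Uf hμ hf
  refine ⟨hzeros, ?_, fun h => zeros_notMem_Uf hf0 (h ▸ hzeros)⟩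
  rw [union_singleton]
  exact (dens1_Uf_subset hf0).antisymm (insert_subset hzeros (Uf_subset_dens1 hμ))
end
end
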